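/- Let A be an n×n matrix with zero diagonal and ‖A‖_∞ ≤ 1 (maximum absolute row sum at most 1), and let 0 < η < 1. Draw a random subset I' ⊆ [n] by including each i independently with probability η/2, and let I = {i ∈ I' : Σ_{k∈I'} |A_{ik}| ≤ η}. Then for each fixed i ∈ [n], Pr[i ∈ I] ≥ η/4. -/

import Mathlib

/-!
Under the product measure the event `i ∈ I'` has probability `η/2`, and since `A i i = 0` the
load `∑_{k ∈ I'} |A i k|` only involves coordinates `k ≠ i`; on the event `i ∈ I'` its
expectation is therefore `(η/2)² ∑ₖ |A i k| ≤ η²/4`. Markov's inequality bounds the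
probability that `i ∈ I'` and the load exceeds `η` by `η/4`, leaving at least `η/2 - η/4`.
-/

open Finset

section BernoulliWeight

variable {ι : Type*} [Fintype ι] (p : ℝ)

def bernoulliWeight (σ : ι → Bool) : ℝ :=
  ∏ j, if σ j then p else 1 - p

variable {p}

lemma bernoulliWeight_nonneg (hp₀ : 0 ≤ p) (hp₁ : p ≤ 1) (σ : ι → Bool) :
    0 ≤ bernoulliWeight p σ :=
  prod_nonneg fun j _ => by split_ifs <;> linarith

variable (p) [DecidableEq ι]

lemma sum_bernoulliWeight_filter_forall_mem (S : Finset ι) :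
    ∑ σ ∈ univ.filter (fun σ : ι → Bool => ∀ j ∈ S, σ j = true), bernoulliWeight p σ
      = p ^ #S := by
  calc _ = ∑ σ : ι → Bool,
        ∏ j, if (j ∈ S → σ j = true) then (if σ j then p else 1 - p) else 0 := by
        rw [sum_filter]
        refine sum_congr rfl fun σ _ => ?_
        simp [Fintype.prod_ite_zero, bernoulliWeight]
    _ = ∏ j, ∑ b : Bool, if (j ∈ S → b = true) then (if b then p else 1 - p) else 0 :=
        (Fintype.prod_sum fun j (b : Bool) =>
          if (j ∈ S → b = true) then (if b then p else 1 - p) else 0).symm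
    _ = ∏ j, if j ∈ S then p else 1 := by
        refine prod_congr rfl fun j _ => ?_
        by_cases hj : j ∈ S <;> simp [hj]
    _ = p ^ #S := by rw [prod_ite_mem, univ_inter, prod_const]

lemma sum_bernoulliWeight_filter_apply (i : ι) :
    ∑ σ ∈ univ.filter (fun σ : ι → Bool => σ i = true), bernoulliWeight p σ = p := by
  simpa using sum_bernoulliWeight_filter_forall_mem p {i}

lemma sum_bernoulliWeight_filter_apply_and_apply {i k : ι} (hik : i ≠ k) :
    ∑ σ ∈ univ.filter (fun σ : ι → Bool => σ i = true ∧ σ k = true), bernoulliWeight p σ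
      = p ^ 2 := by
  simpa [card_pair hik] using sum_bernoulliWeight_filter_forall_mem p {i, k}

lemma sum_bernoulliWeight_mul_sum_filter {i : ι} (a : ι → ℝ) (ha : a i = 0) :
    ∑ σ ∈ univ.filter (fun σ : ι → Bool => σ i = true),
        bernoulliWeight p σ * ∑ k ∈ univ.filter (fun k => σ k = true), a k
      = p ^ 2 * ∑ k, a k := by
  calc _ = ∑ k, a k * ∑ σ ∈ univ.filter (fun σ : ι → Bool => σ i = true ∧ σ k = true),
          bernoulliWeight p σ := by
        simp only [mul_sum, sum_filter]
        rw [sum_comm]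
        refine sum_congr rfl fun σ _ => ?_
        by_cases hi : σ i <;> simp [hi, mul_comm]
    _ = ∑ k, a k * p ^ 2 := by
        refine sum_congr rfl fun k _ => ?_
        rcases eq_or_ne i k with rfl | hik
        · simp [ha]
        · rw [sum_bernoulliWeight_filter_apply_and_apply p hik]
    _ = p ^ 2 * ∑ k, a k := by rw [mul_sum]; simp only [mul_comm]

end BernoulliWeight

lemma Finset.mul_sum_filter_lt_le_sum_mul {α : Type*} (s : Finset α) (w g : α → ℝ)
    (hw : ∀ x ∈ s, 0 ≤ w x) (hg : ∀ x ∈ s, 0 ≤ g x) (c : ℝ) :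
    c * ∑ x ∈ s.filter (fun x => c < g x), w x ≤ ∑ x ∈ s, w x * g x := by
  calc c * ∑ x ∈ s.filter (fun x => c < g x), w x
      ≤ ∑ x ∈ s.filter (fun x => c < g x), w x * g x := by
        rw [mul_sum]
        refine sum_le_sum fun x hx => ?_
        obtain ⟨hxs, hcx⟩ := mem_filter.mp hx
        rw [mul_comm]
        exact mul_le_mul_of_nonneg_left hcx.le (hw x hxs)
    _ ≤ ∑ x ∈ s, w x * g x :=
        sum_le_sum_of_subset_of_nonneg (filter_subset _ _)
          fun x hx _ => mul_nonneg (hw x hx) (hg x hx)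

theorem stmt_11 {n : ℕ} (A : Matrix (Fin n) (Fin n) ℝ) (η : ℝ)
    (hη0 : 0 < η) (hη1 : η < 1)
    (hdiag : ∀ i, A i i = 0) (hrow : ∀ i, ∑ j, |A i j| ≤ 1)
    (i : Fin n)
    -- `w σ` : probability of the inclusion pattern `σ` when each index is
    -- included independently with probability `η/2`
    (w : (Fin n → Bool) → ℝ)
    (hw : ∀ σ, w σ = ∏ j, (if σ j then η / 2 else 1 - η / 2)) :
    η / 4 ≤ ∑ σ ∈ Finset.univ.filter (fun σ : Fin n → Bool =>
        σ i = true ∧ ∑ k ∈ Finset.univ.filter (fun k => σ k = true), |A i k| ≤ η), w σ := by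
  obtain rfl : w = bernoulliWeight (η / 2) := funext hw
  set load : (Fin n → Bool) → ℝ := fun σ => ∑ k ∈ univ.filter (fun k => σ k = true), |A i k|
  set chosen := univ.filter (fun σ : Fin n → Bool => σ i = true)
  have h_chosen : ∑ σ ∈ chosen, bernoulliWeight (η / 2) σ = η / 2 :=
    sum_bernoulliWeight_filter_apply _ i
  have h_moment : ∑ σ ∈ chosen, bernoulliWeight (η / 2) σ * load σ ≤ (η / 2) ^ 2 := by
    rw [sum_bernoulliWeight_mul_sum_filter _ _ (by simp [hdiag])]
    exact mul_le_of_le_one_right (by positivity) (hrow i)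
  have h_markov := mul_sum_filter_lt_le_sum_mul chosen (bernoulliWeight (η / 2)) load
    (fun σ _ => bernoulliWeight_nonneg (by linarith) (by linarith) σ)
    (fun σ _ => sum_nonneg fun k _ => abs_nonneg _) η
  have h_split := sum_filter_add_sum_filter_not chosen (fun σ => load σ ≤ η)
    (bernoulliWeight (η / 2))
  have h_bad : ∑ σ ∈ chosen.filter (fun σ => η < load σ), bernoulliWeight (η / 2) σ ≤ η / 4 :=
    le_of_mul_le_mul_left (by linarith) hη0
  simp only [not_le] at h_split
  rw [← filter_filter]
  linarith
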